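/- Let F: Sym(N) → ℝ satisfy uniform ellipticity with constants 0 < a ≤ A and F(0)=0, and define, for α ≥ 0 and p ∈ ℝ^N, Θ_α(p) = Diag(|p₁|^{α/2}, ..., |p_N|^{α/2}). Then there exists a constant c depending only on A, N such that for all p, q ∈ ℝ^N and all M ∈ Sym(N): |F(Θ_α(p) M Θ_α(p)) - F(Θ_α(q) M Θ_α(q))| ≤ c (|p|^{α/2} + |q|^{α/2}) (∑ᵢ | |pᵢ|^{α/2} - |qᵢ|^{α/2} |) ‖M‖. -/

import Mathlib

open Matrix

/-- `Θ_α(p)` is the diagonal matrix with entries `|pᵢ|^{α/2}`. -/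
noncomputable def Theta {N : ℕ} (α : ℝ) (p : Fin N → ℝ) : Matrix (Fin N) (Fin N) ℝ :=
  Matrix.diagonal fun i => |p i| ^ (α / 2)

/-!
For symmetric `X`, `Y` and `t = ‖X - Y‖` (Frobenius norm), both `t • 1` and `X - Y + t • 1` are
positive semidefinite, the latter because `|xᵀ D x| ≤ ‖D‖ xᵀx`. Writing
`X + t • 1 = Y + (X - Y + t • 1)`, the lower ellipticity bound gives `F X ≤ F (X + t • 1)` and the
upper one gives `F (X + t • 1) - F Y ≤ A · tr (X - Y + t • 1) ≤ 2 A N t`: so `F` is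
`2 A N`-Lipschitz on symmetric matrices. For `X = Θ_α(p) M Θ_α(p)` the entries of `X - Y` are
`(θᵢ - θ'ᵢ) Mᵢⱼ θⱼ + θ'ᵢ Mᵢⱼ (θⱼ - θ'ⱼ)`, and `θᵢ = |pᵢ|^{α/2} ≤ |p|^{α/2}`.
-/

attribute [local instance] Matrix.frobeniusNormedAddCommGroup

namespace Matrix
variable {m n : Type*} [Fintype m] [Fintype n]

lemma frobenius_norm_eq_sqrt (M : Matrix m n ℝ) : ‖M‖ = √(∑ i, ∑ j, M i j ^ 2) := by
  simp [frobenius_norm_def, Real.sqrt_eq_rpow]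

lemma abs_apply_le_frobenius_norm (M : Matrix m n ℝ) (i : m) (j : n) : |M i j| ≤ ‖M‖ :=
  calc |M i j| ≤ ‖WithLp.toLp 2 (M i)‖ := PiLp.norm_apply_le (WithLp.toLp 2 (M i)) j
    _ ≤ ‖M‖ := PiLp.norm_apply_le (WithLp.toLp 2 fun i => WithLp.toLp 2 (M i)) i

lemma frobenius_norm_le_of_abs_apply_le {M M' : Matrix m n ℝ} {C : ℝ} (hC : 0 ≤ C)
    (h : ∀ i j, |M i j| ≤ C * |M' i j|) : ‖M‖ ≤ C * ‖M'‖ := by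
  rw [frobenius_norm_eq_sqrt, frobenius_norm_eq_sqrt, ← Real.sqrt_sq hC,
    ← Real.sqrt_mul (sq_nonneg C)]
  gcongr with i _ j _
  simp only [Finset.mul_sum]
  gcongr with i _ j _
  rw [← sq_abs, ← sq_abs (M' i j), ← mul_pow]
  exact pow_le_pow_left₀ (abs_nonneg _) (h i j) 2

lemma abs_dotProduct_mulVec_le_frobenius_norm (D : Matrix n n ℝ) (x : n → ℝ) :
    |x ⬝ᵥ D *ᵥ x| ≤ ‖D‖ * (x ⬝ᵥ x) := by
  have hx : ‖WithLp.toLp 2 x‖ * ‖WithLp.toLp 2 x‖ = x ⬝ᵥ x := by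
    rw [← sq, EuclideanSpace.norm_sq_eq]
    simp [dotProduct, sq]
  calc |x ⬝ᵥ D *ᵥ x| = |(replicateRow Unit x * replicateCol Unit (D *ᵥ x)) () ()| := rfl
    _ ≤ ‖replicateRow Unit x * (D * replicateCol Unit x)‖ := by
        rw [← replicateCol_mulVec]; exact abs_apply_le_frobenius_norm _ _ _
    _ ≤ ‖replicateRow Unit x‖ * (‖D‖ * ‖replicateCol Unit x‖) :=
        (frobenius_norm_mul _ _).trans (by gcongr; exact frobenius_norm_mul _ _)
    _ = ‖D‖ * (x ⬝ᵥ x) := by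
        rw [frobenius_norm_replicateRow, frobenius_norm_replicateCol, ← hx]; ring

lemma trace_le_card_mul_frobenius_norm (D : Matrix n n ℝ) :
    D.trace ≤ Fintype.card n * ‖D‖ := by
  calc D.trace ≤ ∑ _i : n, ‖D‖ := Finset.sum_le_sum fun i _ =>
        (le_abs_self _).trans (abs_apply_le_frobenius_norm D i i)
    _ = Fintype.card n * ‖D‖ := by simp

lemma posSemidef_add_frobenius_norm_smul_one [DecidableEq n] {D : Matrix n n ℝ}
    (hD : D.IsSymm) :
    (D + ‖D‖ • 1).PosSemidef := by
  refine .of_dotProduct_mulVec_nonneg ?_ fun x => ?_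
  · exact isHermitian_iff_isSymm.mpr (hD.add (isSymm_one.smul _))
  · rw [star_trivial, add_mulVec, dotProduct_add, smul_mulVec, one_mulVec, dotProduct_smul,
      smul_eq_mul]
    linarith [neg_abs_le (x ⬝ᵥ D *ᵥ x), abs_dotProduct_mulVec_le_frobenius_norm D x]

lemma IsSymm.diagonal_mul_mul_diagonal [DecidableEq n] {M : Matrix n n ℝ} (hM : M.IsSymm)
    (d : n → ℝ) : (diagonal d * M * diagonal d).IsSymm := by
  simp [IsSymm, transpose_mul, hM.eq, Matrix.mul_assoc]

lemma frobenius_norm_diagonal_mul_mul_diagonal_sub_le [DecidableEq n] (M : Matrix n n ℝ)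
    {d e : n → ℝ} {s t : ℝ} (hs : 0 ≤ s) (ht : 0 ≤ t) (hd : ∀ i, |d i| ≤ s)
    (he : ∀ i, |e i| ≤ t) :
    ‖diagonal d * M * diagonal d - diagonal e * M * diagonal e‖
      ≤ (s + t) * (∑ i, |d i - e i|) * ‖M‖ := by
  set S := ∑ i, |d i - e i|
  have hS : ∀ i, |d i - e i| ≤ S := fun i =>
    Finset.single_le_sum (f := fun i => |d i - e i|) (fun _ _ => abs_nonneg _) (Finset.mem_univ i)
  refine frobenius_norm_le_of_abs_apply_le (by positivity) fun i j => ?_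
  calc |(diagonal d * M * diagonal d - diagonal e * M * diagonal e) i j|
      = |(d i - e i) * M i j * d j + e i * M i j * (d j - e j)| := by
        rw [sub_apply, mul_diagonal, diagonal_mul, mul_diagonal, diagonal_mul]; ring_nf
    _ ≤ |d i - e i| * |M i j| * |d j| + |e i| * |M i j| * |d j - e j| := by
        rw [← abs_mul, ← abs_mul, ← abs_mul, ← abs_mul]; exact abs_add_le _ _
    _ ≤ S * |M i j| * s + t * |M i j| * S := by
        gcongr
        exacts [hS i, hd j, he i, hS j]
    _ = (s + t) * S * |M i j| := by ring

end Matrix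

def IsUniformlyElliptic {n : Type*} [Fintype n] (a A : ℝ) (F : Matrix n n ℝ → ℝ) : Prop :=
  ∀ M P : Matrix n n ℝ, M.IsSymm → P.PosSemidef →
    a * P.trace ≤ F (M + P) - F M ∧ F (M + P) - F M ≤ A * P.trace

namespace IsUniformlyElliptic

variable {n : Type*} [Fintype n] {a A : ℝ} {F : Matrix n n ℝ → ℝ}

lemma le_add_of_posSemidef (hF : IsUniformlyElliptic a A F) (ha : 0 ≤ a) {M P : Matrix n n ℝ}
    (hM : M.IsSymm) (hP : P.PosSemidef) : F M ≤ F (M + P) := by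
  linarith [(hF M P hM hP).1, mul_nonneg ha hP.trace_nonneg]

lemma sub_le [DecidableEq n] (hF : IsUniformlyElliptic a A F) (ha : 0 ≤ a) (hA : 0 ≤ A)
    {X Y : Matrix n n ℝ} (hX : X.IsSymm) (hY : Y.IsSymm) :
    F X - F Y ≤ 2 * A * Fintype.card n * ‖X - Y‖ := by
  set t := ‖X - Y‖
  have hP : (X - Y + t • 1).PosSemidef := posSemidef_add_frobenius_norm_smul_one (hX.sub hY)
  have hup := (hF Y (X - Y + t • 1) hY hP).2
  have hmono := hF.le_add_of_posSemidef ha hX (PosSemidef.one.smul (norm_nonneg (X - Y)))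
  have htr : (X - Y + t • 1).trace ≤ 2 * Fintype.card n * t := by
    rw [trace_add, trace_smul, trace_one, smul_eq_mul]
    linarith [trace_le_card_mul_frobenius_norm (X - Y)]
  calc F X - F Y ≤ F (Y + (X - Y + t • 1)) - F Y := by
        rw [show Y + (X - Y + t • 1) = X + t • 1 by abel]; linarith
    _ ≤ A * (2 * Fintype.card n * t) := hup.trans (by gcongr)
    _ = 2 * A * Fintype.card n * t := by ring

lemma abs_sub_le [DecidableEq n] (hF : IsUniformlyElliptic a A F) (ha : 0 ≤ a) (hA : 0 ≤ A)
    {X Y : Matrix n n ℝ} (hX : X.IsSymm) (hY : Y.IsSymm) :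
    |F X - F Y| ≤ 2 * A * Fintype.card n * ‖X - Y‖ := by
  refine abs_sub_le_iff.mpr ⟨hF.sub_le ha hA hX hY, ?_⟩
  simpa only [norm_sub_rev] using hF.sub_le ha hA hY hX

end IsUniformlyElliptic

lemma abs_le_sqrt_sum_sq {ι : Type*} [Fintype ι] (p : ι → ℝ) (i : ι) : |p i| ≤ √(∑ j, p j ^ 2) :=
  Real.abs_le_sqrt <|
    Finset.single_le_sum (f := fun j => p j ^ 2) (fun _ _ => sq_nonneg _) (Finset.mem_univ i)

theorem property_P1_general (N : ℕ) (a A : ℝ) (ha : 0 < a) (haA : a ≤ A) (α : ℝ) (hα : 0 ≤ α)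
    (F : Matrix (Fin N) (Fin N) ℝ → ℝ)
    (hF : ∀ M P : Matrix (Fin N) (Fin N) ℝ, M.IsSymm → P.PosSemidef →
      a * P.trace ≤ F (M + P) - F M ∧ F (M + P) - F M ≤ A * P.trace) :
    ∃ c > (0 : ℝ), ∀ (p q : Fin N → ℝ) (M : Matrix (Fin N) (Fin N) ℝ), M.IsSymm →
      |F (Theta α p * M * Theta α p) - F (Theta α q * M * Theta α q)|
        ≤ c * ((Real.sqrt (∑ i, (p i) ^ 2)) ^ (α / 2) + (Real.sqrt (∑ i, (q i) ^ 2)) ^ (α / 2))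
            * (∑ i, abs (|p i| ^ (α / 2) - |q i| ^ (α / 2)))
            * Real.sqrt (∑ i, ∑ j, (M i j) ^ 2) := by
  have hA : 0 ≤ A := ha.le.trans haA
  have hθ (r : Fin N → ℝ) (i : Fin N) : |(|r i| ^ (α / 2))| ≤ √(∑ j, r j ^ 2) ^ (α / 2) := by
    rw [abs_of_nonneg (by positivity)]
    exact Real.rpow_le_rpow (abs_nonneg _) (abs_le_sqrt_sum_sq r i) (by linarith)
  refine ⟨2 * A * N + 1, by positivity, fun p q M hM => ?_⟩
  have hsymm (r : Fin N → ℝ) : (Theta α r * M * Theta α r).IsSymm :=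
    hM.diagonal_mul_mul_diagonal _
  rw [← frobenius_norm_eq_sqrt]
  calc _ ≤ 2 * A * N * ‖Theta α p * M * Theta α p - Theta α q * M * Theta α q‖ := by
        have h := IsUniformlyElliptic.abs_sub_le hF ha.le hA (hsymm p) (hsymm q)
        rwa [Fintype.card_fin] at h
    _ ≤ 2 * A * N * ((√(∑ i, p i ^ 2) ^ (α / 2) + √(∑ i, q i ^ 2) ^ (α / 2))
          * (∑ i, |(|p i| ^ (α / 2)) - |q i| ^ (α / 2)|) * ‖M‖) := by
        gcongr
        exact frobenius_norm_diagonal_mul_mul_diagonal_sub_le M (by positivity) (by positivity)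
          (hθ p) (hθ q)
    _ ≤ _ := by
        rw [← mul_assoc, ← mul_assoc]
        gcongr
        linarith

theorem property_P1 (N : ℕ) (a A : ℝ) (ha : 0 < a) (haA : a ≤ A) (α : ℝ) (hα : 0 ≤ α)
    (F : Matrix (Fin N) (Fin N) ℝ → ℝ) (hF0 : F 0 = 0)
    (hF : ∀ M P : Matrix (Fin N) (Fin N) ℝ, M.IsSymm → P.PosSemidef →
      a * P.trace ≤ F (M + P) - F M ∧ F (M + P) - F M ≤ A * P.trace) :
    ∃ c > (0 : ℝ), ∀ (p q : Fin N → ℝ) (M : Matrix (Fin N) (Fin N) ℝ), M.IsSymm →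
      |F (Theta α p * M * Theta α p) - F (Theta α q * M * Theta α q)|
        ≤ c * ((Real.sqrt (∑ i, (p i) ^ 2)) ^ (α / 2) + (Real.sqrt (∑ i, (q i) ^ 2)) ^ (α / 2))
            * (∑ i, abs (|p i| ^ (α / 2) - |q i| ^ (α / 2)))
            * Real.sqrt (∑ i, ∑ j, (M i j) ^ 2) :=
  property_P1_general N a A ha haA α hα F hF
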